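/- arXiv:0806.1053 — 7 statements merged into one kernel-verified Lean document; each statement's English description precedes it below -/
import Mathlib

section
/- Let x and y be quaternions with zero real part and norm one (i.e. purely imaginary unit quaternions, which correspond to the trace-free elements of SU(2)). Then the braid relation x*y*x = y*x*y holds if and only if either x = y, or the real inner product of x and y equals -1/2 (equivalently Re(x * conj(y)) = -1/2, i.e. the corresponding points of the unit 2-sphere of imaginary quaternions make angle 2π/3). -/
/-! Write `t = Re (x * star y)`. Purely imaginary quaternions anticommute up to a real scalar,
`x * y + y * x = -2 t`, and unit ones square to `-1`. Expanding with these two rules gives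
`x * y * x - y * x * y = (1 + 2 t) • (y - x)`, which vanishes exactly when `x = y` or `t = -1/2`. -/

namespace Quaternion

variable {R : Type*} [CommRing R] {x y : ℍ[R]}

theorem star_eq_neg_of_re_eq_zero (hx : x.re = 0) : star x = -x := by
  ext <;> simp [hx]

theorem mul_add_mul_swap_of_re_eq_zero (hx : x.re = 0) (hy : y.re = 0) :
    x * y + y * x = ((-2 * (x * star y).re : R) : ℍ[R]) := by
  have hstar : star (x * y) = y * x := by
    rw [star_mul, star_eq_neg_of_re_eq_zero hx, star_eq_neg_of_re_eq_zero hy, neg_mul_neg]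
  rw [← hstar, self_add_star', star_eq_neg_of_re_eq_zero hy, mul_neg, re_neg, mul_neg, neg_mul,
    neg_neg]

theorem mul_mul_sub_mul_mul_of_re_eq_zero (hx : x.re = 0) (hy : y.re = 0)
    (hxx : x ^ 2 = -1) (hyy : y ^ 2 = -1) :
    x * y * x - y * x * y = (1 + 2 * (x * star y).re) • (y - x) := by
  set t := (x * star y).re
  have hxy : x * y = ((-2 * t : R) : ℍ[R]) - y * x :=
    eq_sub_of_add_eq (mul_add_mul_swap_of_re_eq_zero hx hy)
  calc x * y * x - y * x * y = x * y * x - y * (x * y) := by rw [mul_assoc y]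
    _ = (-2 * t) • x - y * x ^ 2 - (-2 * t) • y + y ^ 2 * x := by
      rw [hxy, sub_mul, mul_sub, coe_mul_eq_smul, mul_coe_eq_smul, sq, sq]; noncomm_ring
    _ = _ := by
      rw [hxx, hyy, mul_neg_one, neg_one_mul]; module

end Quaternion

open Quaternion in
/-- For purely imaginary unit quaternions `x` and `y` (the trace-free elements of `SU(2)`),
the braid relation `x * y * x = y * x * y` holds if and only if `x = y` or the real inner
product `Re (x * conj y)` equals `-1/2`. -/
theorem braid_relation_imaginary_unit_quaternions
    (x y : Quaternion ℝ) (hx : x.re = 0) (hy : y.re = 0)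
    (hnx : ‖x‖ = 1) (hny : ‖y‖ = 1) :
    x * y * x = y * x * y ↔ x = y ∨ (x * star y).re = -(1 / 2) := by
  have hxx : x ^ 2 = -1 := by
    rw [sq_eq_neg_normSq.2 hx, normSq_eq_norm_mul_self, hnx, mul_one, coe_one]
  have hyy : y ^ 2 = -1 := by
    rw [sq_eq_neg_normSq.2 hy, normSq_eq_norm_mul_self, hny, mul_one, coe_one]
  rw [← sub_eq_zero, mul_mul_sub_mul_mul_of_re_eq_zero hx hy hxx hyy, smul_eq_zero,
    sub_eq_zero, eq_comm (a := y), or_comm]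
  exact or_congr_right ⟨fun h => by linarith, fun h => by linarith⟩
end

section
/- Let N ≥ 1, and let ζ = exp(2πi/N). Suppose A and B are elements of SU(N) satisfying A B A⁻¹ B⁻¹ = ζ·1. Then every N×N complex matrix X satisfying X A = A X and X B = B X is a scalar multiple of the identity matrix. In particular, every C ∈ SU(N) commuting with both A and B is of the form ζ^k·1 for some integer k with 0 ≤ k ≤ N−1, so there are exactly N such matrices C. -/
/-!
If `a b = ζ b a` with `ζ` a primitive `N`-th root of unity, then `b` carries an eigenvector of `a`
with eigenvalue `μ` to one with eigenvalue `ζ μ`. So the `N` vectors `bᵏ v` are eigenvectors of `a`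
for distinct eigenvalues and span the `N`-dimensional space, even when `v` is chosen inside an
invariant subspace: `a` and `b` act irreducibly, and by Schur's lemma only scalars commute with
both. A scalar `c • 1` lies in `SU(N)` exactly when `cᴺ = 1`, that is, `c = ζᵏ` with `k < N`.
-/

open Module

theorem mul_pow_eq_pow_smul_pow_mul {K R : Type*} [CommSemiring K] [Semiring R] [Algebra K R]
    {a b : R} {ζ : K} (hab : a * b = ζ • (b * a)) (k : ℕ) :
    a * b ^ k = ζ ^ k • (b ^ k * a) := by
  induction k with
  | zero => simp
  | succ k ih =>
    rw [pow_succ, ← mul_assoc, ih, smul_mul_assoc, mul_assoc, hab, mul_smul_comm, smul_smul,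
      pow_succ, mul_assoc]

namespace Module.End

variable {K V : Type*} [Field K] [AddCommGroup V] [Module K V] {a b : End K V} {ζ μ : K} {v : V}

theorem HasEigenvector.pow_apply_of_mul_eq_smul_mul (hab : a * b = ζ • (b * a))
    (hb : Function.Injective b) (hv : a.HasEigenvector μ v) (k : ℕ) :
    a.HasEigenvector (ζ ^ k * μ) ((b ^ k) v) := by
  refine ⟨mem_eigenspace_iff.mpr ?_, fun h ↦ hv.2 (hb.iterate k ?_)⟩
  · rw [← Module.End.mul_apply, mul_pow_eq_pow_smul_pow_mul hab, LinearMap.smul_apply,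
      Module.End.mul_apply, hv.apply_eq_smul, map_smul, smul_smul]
  · rwa [← coe_pow, map_zero]

theorem linearIndependent_pow_apply {n : ℕ} (hζ : IsPrimitiveRoot ζ n) (hμ : μ ≠ 0)
    (hab : a * b = ζ • (b * a)) (hb : Function.Injective b) (hv : a.HasEigenvector μ v) :
    LinearIndependent K (fun k : Fin n ↦ (b ^ (k : ℕ)) v) :=
  a.eigenvectors_linearIndependent' (fun k : Fin n ↦ ζ ^ (k : ℕ) * μ)
    (fun j k h ↦ Fin.ext (hζ.pow_inj j.isLt k.isLt (mul_right_cancel₀ hμ h))) _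
    (fun k ↦ hv.pow_apply_of_mul_eq_smul_mul hab hb k)

variable [FiniteDimensional K V] [IsAlgClosed K]

theorem eq_top_of_mapsTo_of_mul_eq_smul_mul {n : ℕ} (hV : finrank K V = n)
    (hζ : IsPrimitiveRoot ζ n) (hab : a * b = ζ • (b * a)) (ha : Function.Injective a)
    (hb : Function.Injective b) {W : Submodule K V} (hW : W ≠ ⊥)
    (haW : ∀ v ∈ W, a v ∈ W) (hbW : ∀ v ∈ W, b v ∈ W) : W = ⊤ := by
  have : Nontrivial W := Submodule.nontrivial_iff_ne_bot.mpr hW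
  obtain ⟨μ, hμ⟩ := exists_eigenvalue (a.restrict haW)
  obtain ⟨w, hw⟩ := hμ.exists_hasEigenvector
  have hv : a.HasEigenvector μ w :=
    ⟨mem_eigenspace_iff.mpr (congrArg Subtype.val hw.apply_eq_smul), by simpa using hw.2⟩
  have hμ0 : μ ≠ 0 := by
    rintro rfl
    exact hv.2 (ha (by rw [hv.apply_eq_smul, zero_smul, map_zero]))
  have hli := linearIndependent_pow_apply hζ hμ0 hab hb hv
  have hspan : Submodule.span K (Set.range fun k : Fin n ↦ (b ^ (k : ℕ)) (w : V)) = ⊤ :=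
    Submodule.eq_top_of_finrank_eq (by rw [finrank_span_eq_card hli, Fintype.card_fin, hV])
  refine eq_top_iff.mpr (hspan ▸ Submodule.span_le.mpr ?_)
  rintro _ ⟨k, rfl⟩
  simp only [SetLike.mem_coe, coe_pow]
  exact Set.MapsTo.iterate hbW k w.2

theorem exists_eq_smul_one_of_commute_of_mul_eq_smul_mul {n : ℕ} (hV : finrank K V = n)
    (hζ : IsPrimitiveRoot ζ n) (hab : a * b = ζ • (b * a)) (ha : Function.Injective a)
    (hb : Function.Injective b) {x : End K V} (hxa : Commute x a) (hxb : Commute x b) :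
    ∃ c : K, x = c • 1 := by
  cases subsingleton_or_nontrivial V
  · exact ⟨0, Subsingleton.elim _ _⟩
  obtain ⟨c, hc⟩ := exists_eigenvalue x
  have hker : LinearMap.ker (x - c • 1) = ⊤ := by
    rw [← eigenspace_def]
    exact eq_top_of_mapsTo_of_mul_eq_smul_mul hV hζ hab ha hb (hasEigenvalue_iff.mp hc)
      (mapsTo_genEigenspace_of_comm hxa c 1) (mapsTo_genEigenspace_of_comm hxb c 1)
  exact ⟨c, sub_eq_zero.mp (LinearMap.ker_eq_top.mp hker)⟩

end Module.End

namespace Matrix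

variable {ι : Type*} [Fintype ι] [DecidableEq ι]

theorem mul_eq_smul_mul_of_commutator_eq_smul_one {R : Type*} [CommRing R]
    {A B : Matrix ι ι R} {ζ : R} (hA : IsUnit A) (hB : IsUnit B)
    (h : A * B * A⁻¹ * B⁻¹ = ζ • 1) : A * B = ζ • (B * A) := by
  calc A * B = A * B * A⁻¹ * B⁻¹ * (B * A) := by
        simp only [Matrix.mul_assoc,
          nonsing_inv_mul_cancel_left _ _ ((isUnit_iff_isUnit_det B).mp hB),
          nonsing_inv_mul _ ((isUnit_iff_isUnit_det A).mp hA), Matrix.mul_one]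
    _ = ζ • (B * A) := by rw [h, smul_mul_assoc, Matrix.one_mul]

theorem exists_eq_smul_one_of_commute_of_mul_eq_smul_mul {K : Type*} [Field K] [IsAlgClosed K]
    {n : ℕ} (hι : Fintype.card ι = n) {ζ : K} (hζ : IsPrimitiveRoot ζ n) {A B X : Matrix ι ι K}
    (hA : IsUnit A) (hB : IsUnit B) (hAB : A * B = ζ • (B * A)) (hXA : Commute X A)
    (hXB : Commute X B) :
    ∃ c : K, X = c • 1 := by
  let e := toLinAlgEquiv' (R := K) (n := ι)
  have injective_of_isUnit {M : Matrix ι ι K} (hM : IsUnit M) : Function.Injective (e M) :=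
    ((Module.End.isUnit_iff _).mp (hM.map e)).1
  obtain ⟨c, hc⟩ := Module.End.exists_eq_smul_one_of_commute_of_mul_eq_smul_mul
    (by simp [hι]) hζ (by rw [← map_mul, ← map_mul, hAB, map_smul]) (injective_of_isUnit hA)
    (injective_of_isUnit hB) (hXA.map e) (hXB.map e)
  exact ⟨c, e.injective (by rw [hc, map_smul, map_one])⟩

theorem isUnit_of_mem_specialUnitaryGroup {A : Matrix ι ι ℂ} (hA : A ∈ specialUnitaryGroup ι ℂ) :
    IsUnit A :=
  Unitary.isUnit_coe (U := ⟨A, (mem_specialUnitaryGroup_iff.mp hA).1⟩)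

theorem smul_one_mem_specialUnitaryGroup_iff [Nonempty ι] {c : ℂ} :
    c • (1 : Matrix ι ι ℂ) ∈ specialUnitaryGroup ι ℂ ↔ c ^ Fintype.card ι = 1 := by
  rw [mem_specialUnitaryGroup_iff, mem_unitaryGroup_iff', det_smul, det_one, mul_one, star_smul,
    star_one, smul_mul_smul, Matrix.mul_one,
    (smul_left_injective ℂ one_ne_zero).eq_iff' (one_smul ℂ (1 : Matrix ι ι ℂ))]
  refine ⟨And.right, fun hc ↦ ⟨?_, hc⟩⟩
  rw [RCLike.star_def, Complex.conj_mul',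
    Complex.norm_eq_one_of_pow_eq_one hc Fintype.card_ne_zero]
  norm_num

theorem specialUnitaryGroup_inter_range_smul_one [Nonempty ι] {n : ℕ} (hι : Fintype.card ι = n)
    {ζ : ℂ} (hζ : IsPrimitiveRoot ζ n) :
    (specialUnitaryGroup ι ℂ : Set (Matrix ι ι ℂ)) ∩ Set.range (fun c : ℂ ↦ c • 1) =
      Set.range (fun k : Fin n ↦ ζ ^ (k : ℕ) • 1) := by
  subst hι
  ext C
  simp only [Set.mem_inter_iff, Set.mem_range, SetLike.mem_coe]
  constructor
  · rintro ⟨hC, c, rfl⟩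
    obtain ⟨k, hk, rfl⟩ := hζ.eq_pow_of_pow_eq_one (smul_one_mem_specialUnitaryGroup_iff.mp hC)
    exact ⟨⟨k, hk⟩, rfl⟩
  · rintro ⟨k, rfl⟩
    refine ⟨smul_one_mem_specialUnitaryGroup_iff.mpr ?_, _, rfl⟩
    rw [← pow_mul, mul_comm, pow_mul, hζ.pow_eq_one, one_pow]

end Matrix

open Matrix

/-- If `A, B ∈ SU(N)` satisfy `A B A⁻¹ B⁻¹ = ζ • 1` with `ζ = exp(2πi/N)`, then every matrix
commuting with both `A` and `B` is scalar; in particular every `C ∈ SU(N)` commuting with both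
is `ζ^k • 1` for some `0 ≤ k ≤ N - 1`, and there are exactly `N` such matrices `C`. -/
theorem commutant_of_clock_shift_pair_is_center
    (N : ℕ) (hN : 1 ≤ N)
    (ζ : ℂ) (hζ : ζ = Complex.exp (2 * (Real.pi : ℂ) * Complex.I / (N : ℂ)))
    (A B : Matrix (Fin N) (Fin N) ℂ)
    (hA : A ∈ Matrix.specialUnitaryGroup (Fin N) ℂ)
    (hB : B ∈ Matrix.specialUnitaryGroup (Fin N) ℂ)
    (hcomm : A * B * A⁻¹ * B⁻¹ = ζ • (1 : Matrix (Fin N) (Fin N) ℂ)) :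
    (∀ X : Matrix (Fin N) (Fin N) ℂ, X * A = A * X → X * B = B * X →
      ∃ c : ℂ, X = c • (1 : Matrix (Fin N) (Fin N) ℂ))
    ∧ (∀ C : Matrix (Fin N) (Fin N) ℂ, C ∈ Matrix.specialUnitaryGroup (Fin N) ℂ →
        C * A = A * C → C * B = B * C →
        ∃ k : ℕ, k ≤ N - 1 ∧ C = ζ ^ k • (1 : Matrix (Fin N) (Fin N) ℂ))
    ∧ {C : Matrix (Fin N) (Fin N) ℂ |
        C ∈ Matrix.specialUnitaryGroup (Fin N) ℂ ∧ C * A = A * C ∧ C * B = B * C}.ncard = N := by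
  have : Nonempty (Fin N) := ⟨⟨0, hN⟩⟩
  have hprim : IsPrimitiveRoot ζ N := hζ ▸ Complex.isPrimitiveRoot_exp N (by omega)
  have hA' := isUnit_of_mem_specialUnitaryGroup hA
  have hB' := isUnit_of_mem_specialUnitaryGroup hB
  have hcenter (X : Matrix (Fin N) (Fin N) ℂ) (hXA : X * A = A * X) (hXB : X * B = B * X) :
      ∃ c : ℂ, X = c • 1 :=
    exists_eq_smul_one_of_commute_of_mul_eq_smul_mul (Fintype.card_fin N) hprim hA' hB'
      (mul_eq_smul_mul_of_commutator_eq_smul_one hA' hB' hcomm) hXA hXB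
  have hS : {C | C ∈ specialUnitaryGroup (Fin N) ℂ ∧ C * A = A * C ∧ C * B = B * C} =
      Set.range (fun k : Fin N ↦ ζ ^ (k : ℕ) • (1 : Matrix (Fin N) (Fin N) ℂ)) := by
    rw [← specialUnitaryGroup_inter_range_smul_one (Fintype.card_fin N) hprim]
    ext C
    refine ⟨fun ⟨hC, hCA, hCB⟩ ↦ ⟨hC, (hcenter C hCA hCB).imp fun _ ↦ Eq.symm⟩, ?_⟩
    rintro ⟨hC, c, rfl⟩
    exact ⟨hC, ((Commute.one_left A).smul_left c).eq, ((Commute.one_left B).smul_left c).eq⟩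
  refine ⟨hcenter, fun C hC hCA hCB ↦ ?_, ?_⟩
  · obtain ⟨k, hk⟩ := (Set.ext_iff.mp hS C).mp ⟨hC, hCA, hCB⟩
    exact ⟨k, by omega, hk.symm⟩
  · rw [hS, Set.ncard_range_of_injective, Nat.card_eq_fintype_card, Fintype.card_fin]
    intro j k hjk
    exact Fin.ext (hprim.pow_inj j.2 k.2 ((smul_left_injective ℂ one_ne_zero) hjk))
end

section
/- Let N ≥ 1, let ζ = exp(2πi/N), and let ε be a complex number with ε^N = (−1)^{N−1}. Let D = ε·diag(1, ζ, ζ², …, ζ^{N−1}) be the scaled clock matrix and let S be ε times the cyclic shift matrix (the matrix with (i,j)-entry ε when i ≡ j+1 mod N and 0 otherwise). Then: (i) D and S lie in SU(N) and satisfy D S D⁻¹ S⁻¹ = ζ·1; (ii) every pair (A, B) of elements of SU(N) satisfying A B A⁻¹ B⁻¹ = ζ·1 is simultaneously conjugate to (D, S), i.e. there exists U ∈ SU(N) with A = U D U⁻¹ and B = U S U⁻¹. In particular the set of such pairs is a single orbit of SU(N) acting by simultaneous conjugation. -/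
/-!
If `A v = μ v`, the relation `A B = ζ B A` makes `B ^ k v` an eigenvector of `A` for `ζ ^ k μ`.
These `N` eigenvalues are distinct, so for unitary `A` the vectors `v, B v, …, B ^ (N - 1) v` are
orthonormal, and as columns of a unitary `U` they give `A U = U (μ • clock)`. Comparing
determinants shows `μ ^ N = 1` once `A, B` are divided by `ε`, so moving `v` along its `B`-orbit
we may take `μ = 1`. Then `U⁻¹ B U` is the cyclic shift except for its corner entry
`⟪v, B ^ N v⟫`, and `det B` forces that entry to be `1`. Finally `U` is rescaled by an `N`-th root
of `(det U)⁻¹` to land in `SU(N)`.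
-/

open Matrix

theorem IsPrimitiveRoot.prod_pow_eq_neg_one_pow {R : Type*} [CommRing R] [IsDomain R] {ζ : R}
    {n : ℕ} (hζ : IsPrimitiveRoot ζ (n + 1)) : ∏ i : Fin (n + 1), ζ ^ (i : ℕ) = (-1) ^ n := by
  rw [Finset.prod_pow_eq_pow_sum, Fin.sum_univ_eq_sum_range (fun i => i) (n + 1)]
  have hsum := Finset.sum_range_id_mul_two (n + 1)
  rw [Nat.add_sub_cancel] at hsum
  rcases Nat.even_or_odd' n with ⟨m, rfl | rfl⟩
  · have : ∑ i ∈ Finset.range (2 * m + 1), i = (2 * m + 1) * m := by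
      apply Nat.eq_of_mul_eq_mul_right two_pos; rw [hsum]; ring
    rw [this, pow_mul, hζ.pow_eq_one, one_pow, (even_two_mul m).neg_one_pow]
  · have : ∑ i ∈ Finset.range (2 * m + 1 + 1), i = (m + 1) * (2 * m + 1) := by
      apply Nat.eq_of_mul_eq_mul_right two_pos; rw [hsum]; ring
    have hhalf : IsPrimitiveRoot (ζ ^ (m + 1)) 2 := by
      simpa [show 2 * m + 1 + 1 = (m + 1) * 2 by ring] using
        hζ.pow_of_dvd m.succ_ne_zero (Dvd.intro_left _ (show 2 * (m + 1) = 2 * m + 1 + 1 by ring))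
    rw [this, pow_mul, hhalf.eq_neg_one_of_two_right]

section Semicommuting

variable {ι R : Type*} [Fintype ι] [DecidableEq ι] [CommRing R] {A B : Matrix ι ι R} {ζ μ : R}

theorem Matrix.mul_pow_eq_smul_pow_mul (hAB : A * B = ζ • (B * A)) (k : ℕ) :
    A * B ^ k = ζ ^ k • (B ^ k * A) := by
  induction k with
  | zero => simp
  | succ k ih =>
    rw [pow_succ, ← Matrix.mul_assoc, ih, Matrix.smul_mul, Matrix.mul_assoc, hAB,
      Matrix.mul_smul, smul_smul, ← Matrix.mul_assoc, pow_succ]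

theorem Matrix.mulVec_pow_mulVec_eq_smul (hAB : A * B = ζ • (B * A)) {v : ι → R}
    (hv : A *ᵥ v = μ • v) (k : ℕ) : A *ᵥ (B ^ k *ᵥ v) = (ζ ^ k * μ) • (B ^ k *ᵥ v) := by
  rw [mulVec_mulVec, mul_pow_eq_smul_pow_mul hAB, smul_mulVec, ← mulVec_mulVec, hv,
    mulVec_smul, smul_smul]

theorem Matrix.mul_mul_inv_mul_inv_eq_smul_one_iff (hA : IsUnit A.det) (hB : IsUnit B.det)
    (z : R) : A * B * A⁻¹ * B⁻¹ = z • 1 ↔ A * B = z • (B * A) := by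
  constructor
  · intro h
    calc A * B = A * B * A⁻¹ * B⁻¹ * (B * A) := by
          simp only [Matrix.mul_assoc, nonsing_inv_mul_cancel_left _ _ hB, nonsing_inv_mul _ hA,
            Matrix.mul_one]
      _ = z • (B * A) := by rw [h, Matrix.smul_mul, Matrix.one_mul]
  · intro h
    rw [h, Matrix.smul_mul, Matrix.smul_mul, Matrix.mul_assoc B, mul_nonsing_inv _ hA,
      Matrix.mul_one, mul_nonsing_inv _ hB]

theorem Matrix.eq_mul_mul_inv_of_mul_eq {U : Matrix ι ι R} (hU : IsUnit U.det)
    (h : A * U = U * B) : A = U * B * U⁻¹ := by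
  rw [← h, mul_nonsing_inv_cancel_right _ _ hU]

end Semicommuting

section Unitary

open scoped ComplexOrder

theorem Complex.mem_unitary_of_norm_eq_one {z : ℂ} (hz : ‖z‖ = 1) : z ∈ unitary ℂ :=
  Unitary.mem_iff_star_mul_self.mpr (by rw [Complex.star_def, Complex.conj_mul', hz]; simp)

variable {ι : Type*} [Fintype ι]

theorem exists_star_smul_dotProduct_smul_eq_one {v : ι → ℂ} (hv : v ≠ 0) :
    ∃ c : ℂ, star (c • v) ⬝ᵥ (c • v) = 1 := by
  have hpos : 0 < star v ⬝ᵥ v := dotProduct_star_self_pos_iff.mpr hv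
  set r := (star v ⬝ᵥ v).re
  have hre : star v ⬝ᵥ v = r := Complex.eq_re_of_ofReal_le (r := 0) (by simp [hpos.le])
  have hr : 0 < r := (Complex.pos_iff.mp hpos).1
  refine ⟨((√r)⁻¹ : ℝ), ?_⟩
  rw [star_smul, smul_dotProduct, dotProduct_smul, smul_smul, smul_eq_mul, Complex.star_def,
    Complex.conj_ofReal, hre]
  norm_cast
  rw [← mul_inv, ← sq, Real.sq_sqrt hr.le, inv_mul_cancel₀ hr.ne']

variable [DecidableEq ι]

theorem Matrix.star_mulVec_dotProduct_mulVec {R : Type*} [CommRing R] [StarRing R]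
    {U : Matrix ι ι R} (hU : U ∈ unitaryGroup ι R) (x y : ι → R) :
    star (U *ᵥ x) ⬝ᵥ (U *ᵥ y) = star x ⬝ᵥ y := by
  rw [star_mulVec, dotProduct_mulVec, vecMul_vecMul, ← star_eq_conjTranspose,
    mem_unitaryGroup_iff'.mp hU, vecMul_one]

theorem Matrix.diagonal_mem_unitaryGroup {R : Type*} [CommRing R] [StarRing R] {d : ι → R}
    (hd : ∀ i, d i ∈ unitary R) : diagonal d ∈ unitaryGroup ι R := by
  rw [mem_unitaryGroup_iff', star_eq_conjTranspose, diagonal_conjTranspose,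
    diagonal_mul_diagonal, ← diagonal_one]
  exact congrArg diagonal (funext fun i => Unitary.star_mul_self_of_mem (hd i))

variable {A : Matrix ι ι ℂ} {x y : ι → ℂ} {a b : ℂ}

theorem Matrix.star_mul_self_eq_one_of_mulVec_eq_smul (hA : A ∈ unitaryGroup ι ℂ)
    (hx : A *ᵥ x = a • x) (hx0 : x ≠ 0) : star a * a = 1 := by
  have h := star_mulVec_dotProduct_mulVec hA x x
  rw [hx, star_smul, smul_dotProduct, dotProduct_smul, smul_smul, smul_eq_mul] at h
  exact (mul_left_eq_self₀.mp h).resolve_right (dotProduct_star_self_eq_zero.not.mpr hx0)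

theorem Matrix.dotProduct_eq_zero_of_mulVec_eq_smul (hA : A ∈ unitaryGroup ι ℂ)
    (hx : A *ᵥ x = a • x) (hy : A *ᵥ y = b • y) (hx0 : x ≠ 0) (hab : a ≠ b) :
    star x ⬝ᵥ y = 0 := by
  have ha := star_mul_self_eq_one_of_mulVec_eq_smul hA hx hx0
  have h := star_mulVec_dotProduct_mulVec hA x y
  rw [hx, hy, star_smul, smul_dotProduct, dotProduct_smul, smul_smul, smul_eq_mul] at h
  exact (mul_left_eq_self₀.mp h).resolve_left fun hb =>
    hab (mul_left_cancel₀ (left_ne_zero_of_mul_eq_one ha) (ha.trans hb.symm))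

theorem Matrix.exists_normalized_eigenvector [Nonempty ι] (A : Matrix ι ι ℂ) :
    ∃ (μ : ℂ) (v : ι → ℂ), star v ⬝ᵥ v = 1 ∧ A *ᵥ v = μ • v := by
  obtain ⟨μ, hμ⟩ := Module.End.exists_eigenvalue (toLin' A)
  obtain ⟨v, hv⟩ := hμ.exists_hasEigenvector
  obtain ⟨c, hc⟩ := exists_star_smul_dotProduct_smul_eq_one hv.2
  refine ⟨μ, c • v, hc, ?_⟩
  rw [mulVec_smul, ← toLin'_apply, hv.apply_eq_smul, smul_comm]

theorem Matrix.exists_smul_mem_specialUnitaryGroup [Nonempty ι] {U : Matrix ι ι ℂ}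
    (hU : U ∈ unitaryGroup ι ℂ) : ∃ c : ℂ, c • U ∈ specialUnitaryGroup ι ℂ := by
  have hdet := det_of_mem_unitary hU
  obtain ⟨c, hc⟩ := IsAlgClosed.exists_pow_nat_eq (star U.det) (Fintype.card_pos (α := ι))
  have hc1 : ‖c‖ = 1 := by
    rw [← pow_eq_one_iff_of_nonneg (norm_nonneg c) (Fintype.card_ne_zero (α := ι)), ← norm_pow, hc,
      norm_star, CStarRing.norm_of_mem_unitary hdet]
  refine ⟨c, mem_specialUnitaryGroup_iff.mpr ⟨Unitary.smul_mem_of_mem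
    (Complex.mem_unitary_of_norm_eq_one hc1) hU, ?_⟩⟩
  rw [det_smul, hc, Unitary.star_mul_self_of_mem hdet]

end Unitary

section ClockShift

def clockMatrix {R : Type*} [CommRing R] (n : ℕ) (ζ : R) : Matrix (Fin (n + 1)) (Fin (n + 1)) R :=
  diagonal fun i => ζ ^ (i : ℕ)

def shiftMatrix (n : ℕ) (R : Type*) [CommRing R] : Matrix (Fin (n + 1)) (Fin (n + 1)) R :=
  of fun i j => if i = j + 1 then 1 else 0

variable {R : Type*} [CommRing R] {n : ℕ}

theorem shiftMatrix_eq_submatrix :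
    shiftMatrix n R =
      (1 : Matrix (Fin (n + 1)) (Fin (n + 1)) R).submatrix (finRotate (n + 1)).symm id := by
  ext i j
  simp [shiftMatrix, one_apply, sub_eq_iff_eq_add]

theorem det_shiftMatrix : (shiftMatrix n R).det = (-1) ^ n := by
  simp [shiftMatrix_eq_submatrix, det_permute, sign_finRotate]

theorem shiftMatrix_mem_unitaryGroup [StarRing R] :
    shiftMatrix n R ∈ unitaryGroup (Fin (n + 1)) R := by
  rw [mem_unitaryGroup_iff', shiftMatrix_eq_submatrix, star_eq_conjTranspose,
    conjTranspose_submatrix, conjTranspose_one, submatrix_mul_equiv, Matrix.mul_one,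
    submatrix_id_id]

theorem smul_shiftMatrix_eq (ε : R) : ε • shiftMatrix n R =
    of fun i j : Fin (n + 1) => if (i : ℕ) = ((j : ℕ) + 1) % (n + 1) then ε else 0 := by
  ext i j
  simp [shiftMatrix, Fin.ext_iff, Fin.val_add]

theorem det_clockMatrix [IsDomain R] {ζ : R} (hζ : IsPrimitiveRoot ζ (n + 1)) :
    (clockMatrix n ζ).det = (-1) ^ n := by
  rw [clockMatrix, det_diagonal, hζ.prod_pow_eq_neg_one_pow]

theorem clockMatrix_mem_unitaryGroup {ζ : ℂ} (hζ : IsPrimitiveRoot ζ (n + 1)) :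
    clockMatrix n ζ ∈ unitaryGroup (Fin (n + 1)) ℂ :=
  diagonal_mem_unitaryGroup fun _ =>
    pow_mem (Complex.mem_unitary_of_norm_eq_one (hζ.norm'_eq_one n.succ_ne_zero)) _

theorem clockMatrix_mul_shiftMatrix {ζ : R} (hζ : ζ ^ (n + 1) = 1) :
    clockMatrix n ζ * shiftMatrix n R = ζ • (shiftMatrix n R * clockMatrix n ζ) := by
  ext i j
  simp only [clockMatrix, shiftMatrix, diagonal_mul, mul_diagonal, Matrix.smul_apply, of_apply]
  split_ifs with h
  · subst h
    rw [Fin.val_add_one]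
    split_ifs with hj
    · simp [hj, ← pow_succ', hζ]
    · simp [pow_succ']
  · simp

end ClockShift

section OrbitMatrix

variable {R : Type*} [CommRing R] {n : ℕ}

def orbitMatrix (B : Matrix (Fin (n + 1)) (Fin (n + 1)) R) (v : Fin (n + 1) → R) :
    Matrix (Fin (n + 1)) (Fin (n + 1)) R :=
  of fun i k => (B ^ (k : ℕ) *ᵥ v) i

theorem star_orbitMatrix_mul_mul_orbitMatrix_apply [StarRing R]
    (B M : Matrix (Fin (n + 1)) (Fin (n + 1)) R) (v : Fin (n + 1) → R) (i j : Fin (n + 1)) :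
    (star (orbitMatrix B v) * M * orbitMatrix B v) i j =
      star (B ^ (i : ℕ) *ᵥ v) ⬝ᵥ (M *ᵥ (B ^ (j : ℕ) *ᵥ v)) := by
  rw [Matrix.mul_assoc]
  rfl

theorem mul_orbitMatrix {A B : Matrix (Fin (n + 1)) (Fin (n + 1)) R} {ζ μ : R}
    {v : Fin (n + 1) → R} (hAB : A * B = ζ • (B * A)) (hv : A *ᵥ v = μ • v) :
    A * orbitMatrix B v = orbitMatrix B v * (μ • clockMatrix n ζ) := by
  ext i k
  calc (A * orbitMatrix B v) i k = (A *ᵥ (B ^ (k : ℕ) *ᵥ v)) i := rfl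
    _ = _ := by
      rw [mulVec_pow_mulVec_eq_smul hAB hv]
      simp only [orbitMatrix, clockMatrix, Matrix.mul_smul, Matrix.smul_apply, mul_diagonal,
        of_apply, Pi.smul_apply, smul_eq_mul]
      ring

end OrbitMatrix

section Classification

variable {n : ℕ} {ζ μ : ℂ} {A B : Matrix (Fin (n + 1)) (Fin (n + 1)) ℂ} {v : Fin (n + 1) → ℂ}

theorem star_pow_mulVec_dotProduct_pow_mulVec (hζ : IsPrimitiveRoot ζ (n + 1))
    (hA : A ∈ unitaryGroup (Fin (n + 1)) ℂ) (hB : B ∈ unitaryGroup (Fin (n + 1)) ℂ)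
    (hAB : A * B = ζ • (B * A)) (hv : A *ᵥ v = μ • v) (hv1 : star v ⬝ᵥ v = 1)
    (k l : Fin (n + 1)) :
    star (B ^ (k : ℕ) *ᵥ v) ⬝ᵥ (B ^ (l : ℕ) *ᵥ v) = if k = l then 1 else 0 := by
  have hunit (m : ℕ) : star (B ^ m *ᵥ v) ⬝ᵥ (B ^ m *ᵥ v) = 1 := by
    rw [star_mulVec_dotProduct_mulVec (pow_mem hB m), hv1]
  split_ifs with hkl
  · rw [hkl, hunit]
  have hv0 : v ≠ 0 := by rintro rfl; simp at hv1
  have hμ : μ ≠ 0 :=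
    right_ne_zero_of_mul_eq_one (star_mul_self_eq_one_of_mulVec_eq_smul hA hv hv0)
  refine dotProduct_eq_zero_of_mulVec_eq_smul hA (mulVec_pow_mulVec_eq_smul hAB hv k)
    (mulVec_pow_mulVec_eq_smul hAB hv l) (fun h => by simpa [h] using hunit k) fun h => hkl ?_
  exact Fin.ext (hζ.pow_inj k.isLt l.isLt (mul_right_cancel₀ hμ h))

theorem orbitMatrix_mem_unitaryGroup (hζ : IsPrimitiveRoot ζ (n + 1))
    (hA : A ∈ unitaryGroup (Fin (n + 1)) ℂ) (hB : B ∈ unitaryGroup (Fin (n + 1)) ℂ)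
    (hAB : A * B = ζ • (B * A)) (hv : A *ᵥ v = μ • v) (hv1 : star v ⬝ᵥ v = 1) :
    orbitMatrix B v ∈ unitaryGroup (Fin (n + 1)) ℂ := by
  rw [mem_unitaryGroup_iff', ← Matrix.mul_one (star _)]
  ext k l
  rw [star_orbitMatrix_mul_mul_orbitMatrix_apply, one_mulVec,
    star_pow_mulVec_dotProduct_pow_mulVec hζ hA hB hAB hv hv1, one_apply]

theorem exists_normalized_fixed_vector (hζ : IsPrimitiveRoot ζ (n + 1))
    (hA : A ∈ unitaryGroup (Fin (n + 1)) ℂ) (hB : B ∈ unitaryGroup (Fin (n + 1)) ℂ)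
    (hAB : A * B = ζ • (B * A)) (hdet : A.det = (clockMatrix n ζ).det) :
    ∃ v, star v ⬝ᵥ v = 1 ∧ A *ᵥ v = v := by
  obtain ⟨μ, w, hw1, hw⟩ := exists_normalized_eigenvector A
  have hU := orbitMatrix_mem_unitaryGroup hζ hA hB hAB hw hw1
  have hμ : μ ^ (n + 1) = 1 := by
    have h := congrArg det (mul_orbitMatrix hAB hw)
    rw [det_mul, det_mul, det_smul, Fintype.card_fin, hdet, mul_comm] at h
    have hU0 := left_ne_zero_of_mul_eq_one (Unitary.mul_star_self_of_mem (det_of_mem_unitary hU))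
    have hC0 := left_ne_zero_of_mul_eq_one (Unitary.mul_star_self_of_mem (det_of_mem_unitary hA))
    rw [hdet] at hC0
    exact ((mul_left_eq_self₀.mp (mul_left_cancel₀ hU0 h).symm).resolve_right hC0)
  obtain ⟨j, hj, rfl⟩ := hζ.eq_pow_of_pow_eq_one hμ
  refine ⟨B ^ (n + 1 - j) *ᵥ w, by rw [star_mulVec_dotProduct_mulVec (pow_mem hB _), hw1], ?_⟩
  rw [mulVec_pow_mulVec_eq_smul hAB hw, ← pow_add, Nat.sub_add_cancel hj.le, hζ.pow_eq_one,
    one_smul]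

theorem star_orbitMatrix_mul_mul_orbitMatrix (hζ : IsPrimitiveRoot ζ (n + 1))
    (hA : A ∈ unitaryGroup (Fin (n + 1)) ℂ) (hB : B ∈ unitaryGroup (Fin (n + 1)) ℂ)
    (hAB : A * B = ζ • (B * A)) (hv : A *ᵥ v = v) (hv1 : star v ⬝ᵥ v = 1) :
    star (orbitMatrix B v) * B * orbitMatrix B v = shiftMatrix n ℂ *
      diagonal (Function.update 1 (Fin.last n) (star v ⬝ᵥ (B ^ (n + 1) *ᵥ v))) := by
  have hv' : A *ᵥ v = (1 : ℂ) • v := by rw [one_smul, hv]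
  have horth := star_pow_mulVec_dotProduct_pow_mulVec hζ hA hB hAB hv' hv1
  ext i j
  rw [star_orbitMatrix_mul_mul_orbitMatrix_apply, mulVec_mulVec, ← pow_succ', mul_diagonal]
  simp only [shiftMatrix, of_apply]
  rcases eq_or_ne j (Fin.last n) with rfl | hj
  · rw [Function.update_self, Fin.val_last, Fin.last_add_one]
    rcases eq_or_ne i 0 with rfl | hi
    · simp
    rw [if_neg hi, zero_mul]
    -- `B ^ (n + 1) v` is fixed by `A`, so it is orthogonal to the other eigenvectors `B ^ i v`.
    refine dotProduct_eq_zero_of_mulVec_eq_smul hA (mulVec_pow_mulVec_eq_smul hAB hv' i)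
      (mulVec_pow_mulVec_eq_smul hAB hv' (n + 1)) (fun h => by simpa [h] using horth i i) ?_
    rw [hζ.pow_eq_one, mul_one, mul_one, ← pow_zero ζ]
    exact fun h => hi (Fin.ext (hζ.pow_inj i.isLt n.succ_pos h))
  · rw [Function.update_of_ne hj, Pi.one_apply, mul_one,
      ← Fin.val_add_one_of_lt (Fin.lt_last_iff_ne_last.mpr hj), horth]

theorem exists_unitary_conj_clockMatrix_shiftMatrix (hζ : IsPrimitiveRoot ζ (n + 1))
    (hA : A ∈ unitaryGroup (Fin (n + 1)) ℂ) (hB : B ∈ unitaryGroup (Fin (n + 1)) ℂ)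
    (hAB : A * B = ζ • (B * A)) (hdetA : A.det = (clockMatrix n ζ).det)
    (hdetB : B.det = (shiftMatrix n ℂ).det) :
    ∃ U ∈ unitaryGroup (Fin (n + 1)) ℂ,
      A * U = U * clockMatrix n ζ ∧ B * U = U * shiftMatrix n ℂ := by
  obtain ⟨v, hv1, hv⟩ := exists_normalized_fixed_vector hζ hA hB hAB hdetA
  have hv' : A *ᵥ v = (1 : ℂ) • v := by rw [one_smul, hv]
  set U := orbitMatrix B v
  have hU : U ∈ unitaryGroup _ ℂ := orbitMatrix_mem_unitaryGroup hζ hA hB hAB hv' hv1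
  have hT := star_orbitMatrix_mul_mul_orbitMatrix hζ hA hB hAB hv hv1
  set c := star v ⬝ᵥ (B ^ (n + 1) *ᵥ v)
  have hc : c = 1 := by
    have h := congrArg det hT
    rw [det_mul, det_mul, det_mul, star_eq_conjTranspose, det_conjTranspose, mul_right_comm,
      Unitary.star_mul_self_of_mem (det_of_mem_unitary hU), one_mul, hdetB, det_diagonal,
      Finset.prod_update_of_mem (Finset.mem_univ _)] at h
    simp only [Pi.one_apply, Finset.prod_const_one, mul_one] at h
    exact (mul_right_eq_self₀.mp h.symm).resolve_right (by simp [det_shiftMatrix])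
  refine ⟨U, hU, by simpa using mul_orbitMatrix hAB hv', ?_⟩
  calc B * U = U * (star U * B * U) := by
        rw [Matrix.mul_assoc, ← Matrix.mul_assoc U, mem_unitaryGroup_iff.mp hU, Matrix.one_mul]
    _ = U * shiftMatrix n ℂ := by rw [hT, hc]; simp

theorem exists_specialUnitary_conj_smul_clockMatrix_smul_shiftMatrix
    (hζ : IsPrimitiveRoot ζ (n + 1)) {ε : ℂ} (hε : ε ∈ unitary ℂ)
    (hA : A ∈ unitaryGroup (Fin (n + 1)) ℂ) (hB : B ∈ unitaryGroup (Fin (n + 1)) ℂ)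
    (hAB : A * B = ζ • (B * A)) (hdetA : A.det = (ε • clockMatrix n ζ).det)
    (hdetB : B.det = (ε • shiftMatrix n ℂ).det) :
    ∃ U ∈ specialUnitaryGroup (Fin (n + 1)) ℂ,
      A = U * (ε • clockMatrix n ζ) * U⁻¹ ∧ B = U * (ε • shiftMatrix n ℂ) * U⁻¹ := by
  have hε' := Unitary.star_mem hε
  have hscale (M : Matrix (Fin (n + 1)) (Fin (n + 1)) ℂ) : ε • star ε • M = M := by
    rw [smul_smul, Unitary.mul_star_self_of_mem hε, one_smul]
  have hdet {M N : Matrix (Fin (n + 1)) (Fin (n + 1)) ℂ} (h : M.det = (ε • N).det) :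
      (star ε • M).det = N.det := by
    rw [det_smul, h, det_smul, ← mul_assoc, ← mul_pow, Unitary.star_mul_self_of_mem hε, one_pow,
      one_mul]
  obtain ⟨U, hU, hAU, hBU⟩ := exists_unitary_conj_clockMatrix_shiftMatrix hζ
    (Unitary.smul_mem_of_mem hε' hA) (Unitary.smul_mem_of_mem hε' hB)
    (by rw [smul_mul_smul_comm, hAB, smul_mul_smul_comm, smul_comm]) (hdet hdetA) (hdet hdetB)
  obtain ⟨c, hc⟩ := exists_smul_mem_specialUnitaryGroup hU
  have hcU : IsUnit (c • U).det := by rw [(mem_specialUnitaryGroup_iff.mp hc).2]; exact isUnit_one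
  refine ⟨c • U, hc, eq_mul_mul_inv_of_mul_eq hcU ?_, eq_mul_mul_inv_of_mul_eq hcU ?_⟩
  · rw [Matrix.mul_smul, Matrix.smul_mul, Matrix.mul_smul, ← hAU, Matrix.smul_mul, hscale]
  · rw [Matrix.mul_smul, Matrix.smul_mul, Matrix.mul_smul, ← hBU, Matrix.smul_mul, hscale]

end Classification

/-- The scaled clock matrix `D` and shift matrix `S` lie in `SU(N)` and satisfy
`D S D⁻¹ S⁻¹ = ζ • 1` with `ζ = exp(2πi/N)`, and every pair `(A, B)` in `SU(N)` with
`A B A⁻¹ B⁻¹ = ζ • 1` is simultaneously conjugate to `(D, S)` by an element of `SU(N)`. -/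
theorem clock_shift_classification
    (N : ℕ) (hN : 1 ≤ N)
    (ζ ε : ℂ) (hζ : ζ = Complex.exp (2 * (Real.pi : ℂ) * Complex.I / (N : ℂ)))
    (hε : ε ^ N = (-1 : ℂ) ^ (N - 1))
    (D S : Matrix (Fin N) (Fin N) ℂ)
    (hD : D = ε • Matrix.diagonal (fun i : Fin N => ζ ^ (i : ℕ)))
    (hS : S = Matrix.of (fun i j : Fin N => if (i : ℕ) = ((j : ℕ) + 1) % N then ε else 0)) :
    (D ∈ Matrix.specialUnitaryGroup (Fin N) ℂ
      ∧ S ∈ Matrix.specialUnitaryGroup (Fin N) ℂ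
      ∧ D * S * D⁻¹ * S⁻¹ = ζ • (1 : Matrix (Fin N) (Fin N) ℂ))
    ∧ (∀ A B : Matrix (Fin N) (Fin N) ℂ,
        A ∈ Matrix.specialUnitaryGroup (Fin N) ℂ →
        B ∈ Matrix.specialUnitaryGroup (Fin N) ℂ →
        A * B * A⁻¹ * B⁻¹ = ζ • (1 : Matrix (Fin N) (Fin N) ℂ) →
        ∃ U ∈ Matrix.specialUnitaryGroup (Fin N) ℂ, A = U * D * U⁻¹ ∧ B = U * S * U⁻¹) := by
  obtain ⟨n, rfl⟩ : ∃ n, N = n + 1 := ⟨N - 1, by omega⟩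
  rw [Nat.add_sub_cancel] at hε
  have hζ' : IsPrimitiveRoot ζ (n + 1) := hζ ▸ Complex.isPrimitiveRoot_exp (n + 1) n.succ_ne_zero
  have hεu : ε ∈ unitary ℂ := Complex.mem_unitary_of_norm_eq_one <|
    Complex.norm_eq_one_of_pow_eq_one (n := 2 * (n + 1))
      (by rw [pow_mul', hε, ← pow_mul, mul_comm, pow_mul, neg_one_sq, one_pow]) (by omega)
  have hdet {M : Matrix (Fin (n + 1)) (Fin (n + 1)) ℂ} (hM : M.det = (-1) ^ n) :
      (ε • M).det = 1 := by
    rw [det_smul, Fintype.card_fin, hε, hM, ← pow_add, ← two_mul, pow_mul, neg_one_sq, one_pow]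
  rw [← smul_shiftMatrix_eq] at hS
  change D = ε • clockMatrix n ζ at hD
  subst hD hS
  have hDdet := hdet (det_clockMatrix hζ')
  have hSdet := hdet (det_shiftMatrix (R := ℂ))
  have hcomm := (mul_mul_inv_mul_inv_eq_smul_one_iff (hDdet ▸ isUnit_one) (hSdet ▸ isUnit_one) ζ)
  refine ⟨⟨?_, ?_, hcomm.mpr ?_⟩, fun A B hA hB hAB => ?_⟩
  · exact mem_specialUnitaryGroup_iff.mpr
      ⟨Unitary.smul_mem_of_mem hεu (clockMatrix_mem_unitaryGroup hζ'), hDdet⟩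
  · exact mem_specialUnitaryGroup_iff.mpr
      ⟨Unitary.smul_mem_of_mem hεu shiftMatrix_mem_unitaryGroup, hSdet⟩
  · rw [smul_mul_smul_comm, clockMatrix_mul_shiftMatrix hζ'.pow_eq_one, smul_mul_smul_comm,
      smul_comm]
  rw [mem_specialUnitaryGroup_iff] at hA hB
  refine exists_specialUnitary_conj_smul_clockMatrix_smul_shiftMatrix hζ' hεu hA.1 hB.1 ?_
    (hA.2.trans hDdet.symm) (hB.2.trans hSdet.symm)
  exact (mul_mul_inv_mul_inv_eq_smul_one_iff (hA.2 ▸ isUnit_one) (hB.2 ▸ isUnit_one) ζ).mp hAB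
end

section
/- Let m ≥ 1 and let N₁, …, N_m be positive integers with N = N₁ + ⋯ + N_m. Define real numbers λ_s = (1/(2N))·Σ_{t=1}^{m} sign(t−s)·N_t for s = 1, …, m (where sign(0)=0, sign of a positive integer is 1, of a negative integer is −1). Then: (a) Σ_{s=1}^{m} N_s·λ_s = 0; (b) λ₁ > λ₂ > ⋯ > λ_m; (c) λ₁ − λ_m < 1. Moreover these λ_s are the unique real numbers satisfying (a) together with the monotonicity identity 2N·Σ_{s=1}^{m} μ_s·l_s = Σ_{s=1}^{m} (Σ_{t=1}^{m} sign(t−s)·N_t)·l_s for every m-tuple of integers l₁,…,l_m with Σ_s l_s = 0. -/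
private lemma sign_le_sign' {a b : ℤ} (h : a ≤ b) : a.sign ≤ b.sign := by
  rcases lt_trichotomy a 0 with ha|ha|ha <;> rcases lt_trichotomy b 0 with hb|hb|hb <;>
    simp_all [Int.sign_eq_one_iff_pos.mpr, Int.sign_eq_neg_one_iff_neg.mpr] <;> omega

private lemma sign_bounds' (a : ℤ) : a.sign ≤ 1 ∧ -1 ≤ a.sign := by
  rcases lt_trichotomy a 0 with ha|ha|ha <;>
    simp_all [Int.sign_eq_one_iff_pos.mpr, Int.sign_eq_neg_one_iff_neg.mpr]

/-- For multiplicities `N₁, …, N_m` summing to `N`, the numbers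
`λ_s = (1/(2N)) ∑_t sign(t−s) N_t` are traceless (`∑ N_s λ_s = 0`), strictly decreasing,
satisfy `λ₁ − λ_m < 1`, and are the unique reals satisfying tracelessness together with
the monotonicity identity for all integer tuples `l` with `∑ l_s = 0`. -/
theorem monotone_eigenvalues_SUN
    (m : ℕ) (hm : 1 ≤ m) (Nv : Fin m → ℕ) (hNv : ∀ s, 0 < Nv s)
    (N : ℕ) (hN : N = ∑ s, Nv s)
    (lam : Fin m → ℝ)
    (hlam : ∀ s : Fin m, lam s =
      (1 / (2 * (N : ℝ))) *
        ∑ t : Fin m, (Int.sign (((t : ℕ) : ℤ) - ((s : ℕ) : ℤ)) : ℝ) * (Nv t : ℝ)) :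
    (∑ s, (Nv s : ℝ) * lam s = 0)
    ∧ StrictAnti lam
    ∧ lam ⟨0, by omega⟩ - lam ⟨m - 1, by omega⟩ < 1
    ∧ (∀ μ : Fin m → ℝ,
        (∑ s, (Nv s : ℝ) * μ s = 0) →
        (∀ l : Fin m → ℤ, (∑ s, l s = 0) →
          2 * (N : ℝ) * ∑ s : Fin m, μ s * (l s : ℝ)
            = ∑ s : Fin m,
                (∑ t : Fin m, (Int.sign (((t : ℕ) : ℤ) - ((s : ℕ) : ℤ)) : ℝ) * (Nv t : ℝ))
                  * (l s : ℝ)) →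
        μ = lam) := by
  have hNposNat : 0 < N := by
    rw [hN]
    exact Finset.sum_pos (fun s _ => hNv s) ⟨⟨0, by omega⟩, Finset.mem_univ _⟩
  have hNpos : 0 < (N : ℝ) := by exact_mod_cast hNposNat
  have h2Npos : 0 < 2 * (N : ℝ) := by linarith
  have hinvpos : 0 < 1 / (2 * (N : ℝ)) := by positivity
  set S : Fin m → ℝ := fun s =>
    ∑ t : Fin m, (Int.sign (((t : ℕ) : ℤ) - ((s : ℕ) : ℤ)) : ℝ) * (Nv t : ℝ) with hSdef
  -- (a) tracelessness
  have ha : ∑ s, (Nv s : ℝ) * lam s = 0 := by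
    have hX : ∑ s : Fin m, (Nv s : ℝ) * S s = 0 := by
      have hanti : ∀ s t : Fin m,
          (Nv s : ℝ) * ((Int.sign (((t : ℕ) : ℤ) - ((s : ℕ) : ℤ)) : ℝ) * (Nv t : ℝ))
          = -((Nv t : ℝ) * ((Int.sign (((s : ℕ) : ℤ) - ((t : ℕ) : ℤ)) : ℝ) * (Nv s : ℝ))) := by
        intro s t
        have : (((s : ℕ) : ℤ) - ((t : ℕ) : ℤ)) = -((((t : ℕ) : ℤ) - ((s : ℕ) : ℤ))) := by ring
        rw [this, Int.sign_neg]
        push_cast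
        ring
      have h1 : ∑ s : Fin m, (Nv s : ℝ) * S s
          = ∑ s : Fin m, ∑ t : Fin m,
              (Nv s : ℝ) * ((Int.sign (((t : ℕ) : ℤ) - ((s : ℕ) : ℤ)) : ℝ) * (Nv t : ℝ)) := by
        simp [hSdef, Finset.mul_sum]
      have h2 : ∑ s : Fin m, ∑ t : Fin m,
            (Nv s : ℝ) * ((Int.sign (((t : ℕ) : ℤ) - ((s : ℕ) : ℤ)) : ℝ) * (Nv t : ℝ))
          = -∑ s : Fin m, ∑ t : Fin m,
              (Nv s : ℝ) * ((Int.sign (((t : ℕ) : ℤ) - ((s : ℕ) : ℤ)) : ℝ) * (Nv t : ℝ)) := by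
        conv_lhs => rw [Finset.sum_comm]
        rw [← Finset.sum_neg_distrib]
        refine Finset.sum_congr rfl fun t _ => ?_
        rw [← Finset.sum_neg_distrib]
        refine Finset.sum_congr rfl fun s _ => ?_
        exact hanti s t
      have := h1.trans h2
      rw [h1]
      linarith [h1, h2]
    calc ∑ s, (Nv s : ℝ) * lam s
        = (1 / (2 * (N : ℝ))) * ∑ s, (Nv s : ℝ) * S s := by
          rw [Finset.mul_sum]
          refine Finset.sum_congr rfl fun s _ => ?_
          rw [hlam s]
          ring
      _ = 0 := by rw [hX, mul_zero]
  refine ⟨ha, ?_, ?_, ?_⟩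
  -- (b) strict antitonicity
  · intro a b hab
    rw [hlam a, hlam b]
    have hS : S b < S a := by
      apply Finset.sum_lt_sum
      · intro t _
        have hsg : Int.sign (((t : ℕ) : ℤ) - ((b : ℕ) : ℤ))
            ≤ Int.sign (((t : ℕ) : ℤ) - ((a : ℕ) : ℤ)) := by
          apply sign_le_sign'
          have : (a : ℕ) < (b : ℕ) := hab
          omega
        have : ((Int.sign (((t : ℕ) : ℤ) - ((b : ℕ) : ℤ)) : ℤ) : ℝ)
            ≤ ((Int.sign (((t : ℕ) : ℤ) - ((a : ℕ) : ℤ)) : ℤ) : ℝ) := by exact_mod_cast hsg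
        have hNt : (0:ℝ) ≤ (Nv t : ℝ) := by positivity
        exact mul_le_mul_of_nonneg_right this hNt
      · refine ⟨a, Finset.mem_univ _, ?_⟩
        have h1 : Int.sign (((a : ℕ) : ℤ) - ((b : ℕ) : ℤ)) = -1 := by
          apply Int.sign_eq_neg_one_iff_neg.mpr
          have : (a : ℕ) < (b : ℕ) := hab
          omega
        have h2 : Int.sign (((a : ℕ) : ℤ) - ((a : ℕ) : ℤ)) = 0 := by simp
        rw [h1, h2]
        have hNa : (0:ℝ) < (Nv a : ℝ) := by exact_mod_cast hNv a
        push_cast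
        nlinarith
    exact mul_lt_mul_of_pos_left hS hinvpos
  -- (c) gap bound
  · by_cases h1 : m = 1
    · subst h1
      have : (⟨0, by omega⟩ : Fin 1) = ⟨1 - 1, by omega⟩ := by rfl
      rw [this, sub_self]
      norm_num
    · have hm2 : 2 ≤ m := by omega
      set z : Fin m := ⟨0, by omega⟩
      set w : Fin m := ⟨m - 1, by omega⟩
      have hkey : S z - S w < 2 * (N : ℝ) := by
        have hrw : S z - S w = ∑ t : Fin m,
            (((Int.sign (((t : ℕ) : ℤ) - ((z : ℕ) : ℤ)) : ℝ))
              - ((Int.sign (((t : ℕ) : ℤ) - ((w : ℕ) : ℤ)) : ℝ))) * (Nv t : ℝ) := by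
          rw [hSdef]
          rw [← Finset.sum_sub_distrib]
          refine Finset.sum_congr rfl fun t _ => ?_
          ring
        have h2N : 2 * (N : ℝ) = ∑ t : Fin m, 2 * (Nv t : ℝ) := by
          rw [← Finset.mul_sum, hN]
          push_cast
          ring
        rw [hrw, h2N]
        apply Finset.sum_lt_sum
        · intro t _
          have hb1 := sign_bounds' (((t : ℕ) : ℤ) - ((z : ℕ) : ℤ))
          have hb2 := sign_bounds' (((t : ℕ) : ℤ) - ((w : ℕ) : ℤ))
          have hc1 : ((Int.sign (((t : ℕ) : ℤ) - ((z : ℕ) : ℤ)) : ℤ) : ℝ) ≤ 1 := by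
            exact_mod_cast hb1.1
          have hc2 : (-1 : ℝ) ≤ ((Int.sign (((t : ℕ) : ℤ) - ((w : ℕ) : ℤ)) : ℤ) : ℝ) := by
            exact_mod_cast hb2.2
          have hNt : (0:ℝ) ≤ (Nv t : ℝ) := by positivity
          nlinarith
        · refine ⟨z, Finset.mem_univ _, ?_⟩
          have hz0 : ((z : ℕ) : ℤ) = 0 := by simp [z]
          have hsz : Int.sign (((z : ℕ) : ℤ) - ((z : ℕ) : ℤ)) = 0 := by simp
          have hsw : Int.sign (((z : ℕ) : ℤ) - ((w : ℕ) : ℤ)) = -1 := by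
            apply Int.sign_eq_neg_one_iff_neg.mpr
            have : (w : ℕ) = m - 1 := rfl
            omega
          rw [hsz, hsw]
          have hNz : (0:ℝ) < (Nv z : ℝ) := by exact_mod_cast hNv z
          push_cast
          nlinarith
      rw [hlam z, hlam w]
      have : (1 / (2 * (N : ℝ))) * S z - (1 / (2 * (N : ℝ))) * S w
          = (1 / (2 * (N : ℝ))) * (S z - S w) := by ring
      rw [this]
      calc (1 / (2 * (N : ℝ))) * (S z - S w)
          < (1 / (2 * (N : ℝ))) * (2 * (N : ℝ)) := mul_lt_mul_of_pos_left hkey hinvpos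
        _ = 1 := by field_simp
  -- (d) uniqueness
  · intro μ hμ0 hμid
    have hdiff : ∀ l : Fin m → ℤ, (∑ s, l s = 0) →
        ∑ s : Fin m, (μ s - lam s) * (l s : ℝ) = 0 := by
      intro l hl
      have hlamid : 2 * (N : ℝ) * ∑ s : Fin m, lam s * (l s : ℝ)
          = ∑ s : Fin m, S s * (l s : ℝ) := by
        have : ∑ s : Fin m, lam s * (l s : ℝ)
            = (1 / (2 * (N : ℝ))) * ∑ s : Fin m, S s * (l s : ℝ) := by
          rw [Finset.mul_sum]
          refine Finset.sum_congr rfl fun s _ => ?_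
          rw [hlam s]; ring
        rw [this]
        field_simp
      have h1 := hμid l hl
      have h2 : 2 * (N : ℝ) * ∑ s : Fin m, (μ s - lam s) * (l s : ℝ) = 0 := by
        have : ∑ s : Fin m, (μ s - lam s) * (l s : ℝ)
            = ∑ s : Fin m, μ s * (l s : ℝ) - ∑ s : Fin m, lam s * (l s : ℝ) := by
          rw [← Finset.sum_sub_distrib]
          refine Finset.sum_congr rfl fun s _ => ?_
          ring
        rw [this, mul_sub, h1, hlamid]
        simp [hSdef]
      have h2N' : (2 * (N : ℝ)) ≠ 0 := ne_of_gt h2Npos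
      exact (mul_eq_zero.mp h2).resolve_left h2N'
    set z : Fin m := ⟨0, by omega⟩
    have hconst : ∀ a : Fin m, μ a - lam a = μ z - lam z := by
      intro a
      by_cases haz : a = z
      · rw [haz]
      · set l : Fin m → ℤ := fun s => (if s = a then 1 else 0) - (if s = z then 1 else 0) with hl
        have hsum : ∑ s, l s = 0 := by
          simp [hl, Finset.sum_sub_distrib]
        have := hdiff l hsum
        have heval : ∑ s : Fin m, (μ s - lam s) * (l s : ℝ)
            = (μ a - lam a) - (μ z - lam z) := by
          have : ∀ s : Fin m, (μ s - lam s) * (l s : ℝ)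
              = (if s = a then (μ s - lam s) else 0) - (if s = z then (μ s - lam s) else 0) := by
            intro s
            simp only [hl]
            push_cast
            by_cases h1 : s = a <;> by_cases h2 : s = z <;> simp [h1, h2, haz, Ne.symm haz] <;> ring
          rw [Finset.sum_congr rfl fun s _ => this s, Finset.sum_sub_distrib]
          rw [Finset.sum_ite_eq' Finset.univ a, Finset.sum_ite_eq' Finset.univ z]
          simp
        rw [heval] at this
        linarith
    have hc0 : μ z - lam z = 0 := by
      have hsum : ∑ s, (Nv s : ℝ) * μ s
          = ∑ s, (Nv s : ℝ) * lam s + (μ z - lam z) * (N : ℝ) := by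
        have : ∀ s : Fin m, (Nv s : ℝ) * μ s
            = (Nv s : ℝ) * lam s + (μ z - lam z) * (Nv s : ℝ) := by
          intro s
          have := hconst s
          nlinarith [hconst s]
        rw [Finset.sum_congr rfl fun s _ => this s, Finset.sum_add_distrib]
        rw [← Finset.mul_sum, hN]
        push_cast
        ring
      rw [hμ0, ha] at hsum
      have : (μ z - lam z) * (N : ℝ) = 0 := by linarith
      exact (mul_eq_zero.mp this).resolve_right (ne_of_gt hNpos)
    funext a
    have := hconst a
    rw [hc0] at this
    linarith
end

section
/- Let N₁ and N₂ be positive coprime integers and let N = N₁ + N₂. Then there do not exist integers a and b with 0 ≤ a ≤ N₁, 0 ≤ b ≤ N₂ and 0 < a + b < N such that 2N divides a·N₂ − b·N₁. -/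
/-- If `N₁` and `N₂` are positive coprime integers and `N = N₁ + N₂`, then there are no
integers `a, b` with `0 ≤ a ≤ N₁`, `0 ≤ b ≤ N₂`, `0 < a + b < N` such that
`2N` divides `a·N₂ − b·N₁`. -/
theorem no_reducibles_coprime_multiplicities
    (N₁ N₂ : ℕ) (h₁ : 0 < N₁) (h₂ : 0 < N₂) (hcop : Nat.Coprime N₁ N₂) :
    ¬ ∃ a b : ℕ, a ≤ N₁ ∧ b ≤ N₂ ∧ 0 < a + b ∧ a + b < N₁ + N₂ ∧
      (2 * ((N₁ : ℤ) + N₂)) ∣ ((a : ℤ) * N₂ - (b : ℤ) * N₁) := by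
  rintro ⟨a, b, ha, hb, hpos, hlt, hdvd⟩
  have hN : ((N₁ : ℤ) + N₂) ∣ ((a : ℤ) * N₂ - (b : ℤ) * N₁) :=
    dvd_trans ⟨2, by ring⟩ hdvd
  have key : ((N₁ : ℤ) + N₂) ∣ ((a : ℤ) + b) * N₂ := by
    have : ((a : ℤ) + b) * N₂ = ((a : ℤ) * N₂ - (b : ℤ) * N₁) + b * ((N₁ : ℤ) + N₂) := by
      ring
    rw [this]
    exact dvd_add hN ⟨b, by ring⟩
  have hcop' : IsCoprime ((N₁ : ℤ) + N₂) (N₂ : ℤ) := by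
    have : IsCoprime ((N₁ : ℤ)) (N₂ : ℤ) := Int.isCoprime_iff_gcd_eq_one.mpr hcop
    simpa using this.add_mul_right_left 1
  have hdvd2 : ((N₁ : ℤ) + N₂) ∣ ((a : ℤ) + b) := hcop'.dvd_of_dvd_mul_right key
  have hle : ((N₁ : ℤ) + N₂) ≤ (a : ℤ) + b :=
    Int.le_of_dvd (by exact_mod_cast hpos) hdvd2
  have : ((a : ℤ) + b) < (N₁ : ℤ) + N₂ := by exact_mod_cast hlt
  omega
end

section
/- Let m ≥ 1 and let N₁, …, N_m be positive integers with N = N₁ + ⋯ + N_m; set N₀ = N_m. Let k and l₁, …, l_m be integers with Σ_{s=1}^m l_s = 0, define K_s = k + Σ_{t<s} l_t, and suppose K_s ≥ 0 for all s (the monopole-number inequalities k ≥ 0, k + l₁ ≥ 0, …, k + l₁ + ⋯ + l_{m−1} ≥ 0). Let Q = 4N·k + 2·Σ_{s=1}^m Σ_{t=1}^m sign(t−s)·N_t·l_s. Then: (a) Q ≥ 4·Σ_{s=1}^m K_s ≥ 0; (b) Q = 0 if and only if k = 0 and l_s = 0 for all s; (c) if Q > 0 then Q ≥ min_{s} 2(N_{s−1}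 + N_s) ≥ 4. -/
/-!
Writing `K_s = k + l₁ + ⋯ + l_{s-1}`, the condition `∑ l_s = 0` makes `K` cyclic with
`l_s = K_{s+1} - K_s`, and a summation by parts turns the formal dimension into
`Q = ∑_s 2 (N_{s-1} + N_s) K_s`. All three claims follow from this identity, since every
coefficient is at least `4` and every `K_s` is a nonnegative integer.
-/

open Finset

namespace Finset

theorem sum_mul_eq_zero_iff_of_pos {ι : Type*} (s : Finset ι) {c K : ι → ℤ}
    (hc : ∀ i ∈ s, 0 < c i) (hK : ∀ i ∈ s, 0 ≤ K i) :
    ∑ i ∈ s, c i * K i = 0 ↔ ∀ i ∈ s, K i = 0 := by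
  rw [sum_eq_zero_iff_of_nonneg fun i hi => mul_nonneg (hc i hi).le (hK i hi)]
  exact forall₂_congr fun i hi => by simp [(hc i hi).ne']

theorem inf'_le_sum_mul_of_pos {ι : Type*} (s : Finset ι) (hs : s.Nonempty)
    {c K : ι → ℤ} (hc : ∀ i ∈ s, 0 ≤ c i) (hK : ∀ i ∈ s, 0 ≤ K i)
    (hpos : 0 < ∑ i ∈ s, c i * K i) :
    s.inf' hs c ≤ ∑ i ∈ s, c i * K i := by
  obtain ⟨i, hi, hne⟩ := exists_ne_zero_of_sum_ne_zero hpos.ne'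
  have hKi : 1 ≤ K i := lt_of_le_of_ne (hK i hi) (right_ne_zero_of_mul hne).symm
  calc s.inf' hs c ≤ c i := inf'_le c hi
    _ ≤ c i * K i := le_mul_of_one_le_right (hc i hi) hKi
    _ ≤ ∑ i ∈ s, c i * K i :=
      single_le_sum (fun j hj => mul_nonneg (hc j hj) (hK j hj)) hi

end Finset

namespace Fin

variable {m : ℕ}

theorem sum_sign_sub_mul (f : Fin m → ℤ) (t : Fin m) :
    ∑ s : Fin m, Int.sign (((t : ℕ) : ℤ) - ((s : ℕ) : ℤ)) * f s
      = 2 * ∑ s with s < t, f s + f t - ∑ s, f s := by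
  have hterm : ∀ s : Fin m, Int.sign (((t : ℕ) : ℤ) - ((s : ℕ) : ℤ)) * f s
      = 2 * (if s < t then f s else 0) + (if s = t then f s else 0) - f s := by
    intro s
    rcases lt_trichotomy s t with h | rfl | h
    · have : (0 : ℤ) < (t : ℕ) - (s : ℕ) := sub_pos.mpr (by exact_mod_cast h)
      rw [Int.sign_eq_one_of_pos this, if_pos h, if_neg h.ne]
      ring
    · simp
    · have : ((t : ℕ) : ℤ) - (s : ℕ) < 0 := sub_neg.mpr (by exact_mod_cast h)
      rw [Int.sign_eq_neg_one_of_neg this, if_neg h.not_gt, if_neg h.ne']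
      ring
  simp only [hterm, sum_sub_distrib, sum_add_distrib, ← mul_sum, ← sum_filter]
  simp [filter_eq']

theorem sum_filter_lt_add_one_of_sum_eq_zero [NeZero m] {M : Type*} [AddCommMonoid M]
    (f : Fin m → M) (hf : ∑ s, f s = 0) (t : Fin m) :
    ∑ s with s < t + 1, f s = ∑ s with s < t, f s + f t := by
  have hval : ((t + 1 : Fin m) : ℕ) = ((t : ℕ) + 1) % m := by
    rw [Fin.val_add, Fin.val_one', Nat.add_mod_mod]
  have ht : t ∉ univ.filter (· < t) := by simp
  rcases Nat.lt_or_ge ((t : ℕ) + 1) m with hlt | hge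
  · have hfilter : univ.filter (· < t + 1) = insert t (univ.filter (· < t)) := by
      ext s
      simp only [mem_filter, mem_univ, true_and, mem_insert, Fin.lt_def, Fin.ext_iff, hval,
        Nat.mod_eq_of_lt hlt]
      omega
    rw [hfilter, sum_insert ht, add_comm]
  · have hlast : (t : ℕ) + 1 = m := le_antisymm t.isLt hge
    have hzero : ((t + 1 : Fin m) : ℕ) = 0 := by rw [hval, hlast, Nat.mod_self]
    have hempty : univ.filter (· < t + 1) = ∅ := by
      ext s
      simp only [mem_filter, mem_univ, true_and, Fin.lt_def, hzero, notMem_empty, iff_false]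
      omega
    have herase : univ.filter (· < t) = univ.erase t := by
      ext s
      simp only [mem_filter, mem_univ, true_and, mem_erase, and_true, Fin.lt_def, ne_eq,
        Fin.ext_iff]
      omega
    rw [hempty, herase, sum_erase_add _ _ (mem_univ t), hf, sum_empty]

end Fin

section

variable {m : ℕ}

def partialSum (k : ℤ) (l : Fin m → ℤ) (s : Fin m) : ℤ := k + ∑ t with t < s, l t

def formalDimension (n : Fin m → ℤ) (k : ℤ) (l : Fin m → ℤ) : ℤ :=
  4 * (∑ t, n t) * k
    + 2 * ∑ s : Fin m, ∑ t : Fin m, Int.sign (((t : ℕ) : ℤ) - ((s : ℕ) : ℤ)) * n t * l s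

variable [NeZero m] (k : ℤ) {l : Fin m → ℤ}

@[simp]
theorem partialSum_zero : partialSum k l 0 = k := by
  simp [partialSum]

theorem partialSum_add_one (hl : ∑ s, l s = 0) (t : Fin m) :
    partialSum k l (t + 1) = partialSum k l t + l t := by
  rw [partialSum, partialSum, Fin.sum_filter_lt_add_one_of_sum_eq_zero l hl, add_assoc]

theorem partialSum_eq_zero_iff (hl : ∑ s, l s = 0) :
    (∀ s, partialSum k l s = 0) ↔ k = 0 ∧ ∀ s, l s = 0 := by
  constructor
  · intro h
    refine ⟨by simpa using h 0, fun s => ?_⟩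
    have := partialSum_add_one k hl s
    rw [h, h] at this
    linarith
  · rintro ⟨rfl, hl0⟩ s
    simp [partialSum, hl0]

theorem sum_sign_sub_mul_eq_partialSum (hl : ∑ s, l s = 0) (t : Fin m) :
    ∑ s : Fin m, Int.sign (((t : ℕ) : ℤ) - ((s : ℕ) : ℤ)) * l s
      = partialSum k l t + partialSum k l (t + 1) - 2 * k := by
  rw [Fin.sum_sign_sub_mul, hl, partialSum_add_one k hl, partialSum]
  ring

theorem formalDimension_eq_sum_mul_partialSum (n : Fin m → ℤ) (hl : ∑ s, l s = 0) :
    formalDimension n k l = ∑ s, 2 * (n (s - 1) + n s) * partialSum k l s := by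
  set P := partialSum k l
  have hswap :
      ∑ s : Fin m, ∑ t : Fin m, Int.sign (((t : ℕ) : ℤ) - ((s : ℕ) : ℤ)) * n t * l s
        = ∑ t, n t * (P t + P (t + 1) - 2 * k) := by
    rw [sum_comm]
    refine sum_congr rfl fun t _ => ?_
    rw [← sum_sign_sub_mul_eq_partialSum k hl, mul_sum]
    exact sum_congr rfl fun s _ => by ring
  have hshift : ∑ t, n t * P (t + 1) = ∑ t, n (t - 1) * P t :=
    (Fintype.sum_equiv (Equiv.subRight 1) _ _ fun t => by simp).symm
  have hexpand : ∑ t, n t * (P t + P (t + 1) - 2 * k)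
      = ∑ t, n t * P t + ∑ t, n (t - 1) * P t - (∑ t, n t) * (2 * k) := by
    rw [← hshift, sum_mul, ← sum_add_distrib, ← sum_sub_distrib]
    exact sum_congr rfl fun t _ => by ring
  have hcollect : ∑ s, 2 * (n (s - 1) + n s) * P s
      = 2 * ∑ t, n (t - 1) * P t + 2 * ∑ t, n t * P t := by
    rw [mul_sum, mul_sum, ← sum_add_distrib]
    exact sum_congr rfl fun s _ => by ring
  rw [formalDimension, hswap, hexpand, hcollect]
  ring

end

/-- With `N = N₁ + ⋯ + N_m` (indices cyclic, `N₀ = N_m`), integers `k`, `l₁,…,l_m` with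
`∑ l_s = 0`, `K_s = k + ∑_{t<s} l_t` all nonnegative, and
`Q = 4Nk + 2 ∑_{s,t} sign(t−s) N_t l_s`: (a) `Q ≥ 4 ∑ K_s ≥ 0`; (b) `Q = 0` iff `k = 0` and
all `l_s = 0`; (c) if `Q > 0` then `Q ≥ min_s 2(N_{s−1} + N_s) ≥ 4`. -/
theorem dimension_bound_SUN
    (m : ℕ) [NeZero m] (Nv : Fin m → ℕ) (hNv : ∀ s, 0 < Nv s)
    (N : ℕ) (hN : N = ∑ s, Nv s)
    (k : ℤ) (l : Fin m → ℤ) (hl : ∑ s, l s = 0)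
    (K : Fin m → ℤ)
    (hK : ∀ s : Fin m, K s = k + ∑ t ∈ Finset.univ.filter (fun t => t < s), l t)
    (hKnonneg : ∀ s, 0 ≤ K s)
    (Q : ℤ)
    (hQ : Q = 4 * (N : ℤ) * k
      + 2 * ∑ s : Fin m, ∑ t : Fin m,
          (Int.sign (((t : ℕ) : ℤ) - ((s : ℕ) : ℤ))) * (Nv t : ℤ) * l s) :
    (4 * ∑ s, K s ≤ Q ∧ 0 ≤ 4 * ∑ s, K s)
    ∧ (Q = 0 ↔ k = 0 ∧ ∀ s, l s = 0)
    ∧ (0 < Q →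
        Finset.univ.inf' ⟨0, Finset.mem_univ 0⟩
            (fun s : Fin m => 2 * ((Nv (s - 1) : ℤ) + (Nv s : ℤ))) ≤ Q
        ∧ 4 ≤ Finset.univ.inf' ⟨0, Finset.mem_univ 0⟩
            (fun s : Fin m => 2 * ((Nv (s - 1) : ℤ) + (Nv s : ℤ)))) := by
  obtain rfl : K = partialSum k l := funext hK
  set c : Fin m → ℤ := fun s => 2 * ((Nv (s - 1) : ℤ) + (Nv s : ℤ))
  have hc : ∀ s, 4 ≤ c s := fun s => by
    show 4 ≤ 2 * ((Nv (s - 1) : ℤ) + (Nv s : ℤ))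
    have := hNv (s - 1)
    have := hNv s
    omega
  have hQc : Q = ∑ s, c s * partialSum k l s := by
    rw [hQ, hN, Nat.cast_sum]
    exact formalDimension_eq_sum_mul_partialSum k (fun s => (Nv s : ℤ)) hl
  refine ⟨⟨?_, ?_⟩, ?_, fun hQpos => ⟨?_, le_inf' _ _ fun s _ => hc s⟩⟩
  · rw [hQc, mul_sum]
    exact sum_le_sum fun s _ => mul_le_mul_of_nonneg_right (hc s) (hKnonneg s)
  · exact mul_nonneg (by norm_num) (sum_nonneg fun s _ => hKnonneg s)
  · rw [hQc, sum_mul_eq_zero_iff_of_pos _ (fun s _ => by linarith [hc s]) fun s _ => hKnonneg s,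
      ← partialSum_eq_zero_iff k hl]
    simp only [mem_univ, forall_const]
  · rw [hQc] at hQpos ⊢
    exact inf'_le_sum_mul_of_pos _ _ (fun s _ => by linarith [hc s]) (fun s _ => hKnonneg s) hQpos
end

section
/- Let N ≥ 2 and let u, v be unit vectors in ℂᴺ (with the standard Hermitian inner product ⟨·,·⟩). Let A and B be the unitary reflections A(z) = z − 2⟨u, z⟩·u and B(z) = z − 2⟨v, z⟩·v. Then the braid relation A∘B∘A = B∘A∘B holds if and only if either u and v span the same complex line, or |⟨u, v⟩| = 1/2. -/
/-!
Write `A = 1 - 2P` and `B = 1 - 2Q`, with `P`, `Q` the orthogonal projections onto the lines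
`ℂ u` and `ℂ v`. Expanding, `ABA - BAB = 2 (P - Q) - 8 (PQP - QPQ)`, and `PQP = |⟨u, v⟩|² P`
because `P` has rank one. Hence `ABA - BAB = (2 - 8 |⟨u, v⟩|²) (P - Q)`, which vanishes exactly
when `|⟨u, v⟩| = 1/2` or `P = Q`, i.e. when the two lines coincide.
-/

open scoped InnerProductSpace

section

variable {𝕜 E : Type*} [RCLike 𝕜] [NormedAddCommGroup E] [InnerProductSpace 𝕜 E]

theorem inner_mul_inner_swap_eq_norm_sq (u v : E) :
    ⟪u, v⟫_𝕜 * ⟪v, u⟫_𝕜 = ((‖⟪u, v⟫_𝕜‖ ^ 2 : ℝ) : 𝕜) := by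
  rw [← inner_conj_symm v u, RCLike.mul_conj, RCLike.ofReal_pow, norm_inner_symm]

theorem braid_defect_eq_smul_sub_starProjection {u v : E} (hu : ‖u‖ = 1) (hv : ‖v‖ = 1)
    {A B : E → E} (hA : ∀ z, A z = z - (2 * ⟪u, z⟫_𝕜) • u)
    (hB : ∀ z, B z = z - (2 * ⟪v, z⟫_𝕜) • v) (z : E) :
    A (B (A z)) - B (A (B z)) = (2 - 8 * ((‖⟪u, v⟫_𝕜‖ ^ 2 : ℝ) : 𝕜)) •
      ((𝕜 ∙ u).starProjection z - (𝕜 ∙ v).starProjection z) := by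
  rw [Submodule.starProjection_unit_singleton 𝕜 hu, Submodule.starProjection_unit_singleton 𝕜 hv,
    ← inner_mul_inner_swap_eq_norm_sq]
  simp only [hA, hB, inner_sub_right, inner_smul_right, inner_self_eq_one_of_norm_eq_one hu,
    inner_self_eq_one_of_norm_eq_one hv]
  module

theorem braid_relation_iff_span_singleton_eq_or {u v : E} (hu : ‖u‖ = 1) (hv : ‖v‖ = 1)
    {A B : E → E} (hA : ∀ z, A z = z - (2 * ⟪u, z⟫_𝕜) • u)
    (hB : ∀ z, B z = z - (2 * ⟪v, z⟫_𝕜) • v) :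
    A ∘ B ∘ A = B ∘ A ∘ B ↔
      (𝕜 ∙ u) = (𝕜 ∙ v) ∨ (2 - 8 * ((‖⟪u, v⟫_𝕜‖ ^ 2 : ℝ) : 𝕜)) = 0 := by
  simp only [funext_iff, Function.comp_apply, ← sub_eq_zero (a := A (B (A _))),
    braid_defect_eq_smul_sub_starProjection hu hv hA hB, smul_eq_zero, forall_or_left,
    sub_eq_zero, ← ContinuousLinearMap.ext_iff, Submodule.starProjection_inj]
  exact or_comm

theorem two_sub_eight_mul_sq_eq_zero_iff {x : ℝ} (hx : 0 ≤ x) :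
    (2 - 8 * ((x ^ 2 : ℝ) : 𝕜)) = 0 ↔ x = 1 / 2 := by
  have hcast : (2 - 8 * ((x ^ 2 : ℝ) : 𝕜)) = ((2 - 8 * x ^ 2 : ℝ) : 𝕜) := by push_cast; ring
  rw [hcast, RCLike.ofReal_eq_zero]
  constructor
  · intro h
    nlinarith
  · rintro rfl
    norm_num

end

theorem braid_relation_unitary_reflections_general
    (N : ℕ)
    (u v : EuclideanSpace ℂ (Fin N)) (hu : ‖u‖ = 1) (hv : ‖v‖ = 1)
    (A B : EuclideanSpace ℂ (Fin N) → EuclideanSpace ℂ (Fin N))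
    (hA : ∀ z, A z = z - (2 * (inner ℂ u z : ℂ)) • u)
    (hB : ∀ z, B z = z - (2 * (inner ℂ v z : ℂ)) • v) :
    A ∘ B ∘ A = B ∘ A ∘ B ↔
      Submodule.span ℂ {u} = Submodule.span ℂ {v} ∨ ‖(inner ℂ u v : ℂ)‖ = 1 / 2 := by
  rw [braid_relation_iff_span_singleton_eq_or hu hv hA hB,
    two_sub_eight_mul_sq_eq_zero_iff (norm_nonneg _)]

/-- For unit vectors `u, v ∈ ℂᴺ`, the unitary reflections `A z = z − 2⟨u,z⟩u` and
`B z = z − 2⟨v,z⟩v` satisfy the braid relation `A∘B∘A = B∘A∘B` if and only if `u` and `v`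
span the same complex line or `|⟨u,v⟩| = 1/2`. -/
theorem braid_relation_unitary_reflections
    (N : ℕ) (hN : 2 ≤ N)
    (u v : EuclideanSpace ℂ (Fin N)) (hu : ‖u‖ = 1) (hv : ‖v‖ = 1)
    (A B : EuclideanSpace ℂ (Fin N) → EuclideanSpace ℂ (Fin N))
    (hA : ∀ z, A z = z - (2 * (inner ℂ u z : ℂ)) • u)
    (hB : ∀ z, B z = z - (2 * (inner ℂ v z : ℂ)) • v) :
    A ∘ B ∘ A = B ∘ A ∘ B ↔
      Submodule.span ℂ {u} = Submodule.span ℂ {v} ∨ ‖(inner ℂ u v : ℂ)‖ = 1 / 2 :=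
  braid_relation_unitary_reflections_general N u v hu hv A B hA hB
end
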